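/- Let F be a complete set of filters on n channels all of whose elements have the same size, and let F' ⊆ F be such that every C ∈ F is subsumed by some C' ∈ F'. Then F' is a complete set of filters on n channels. -/

import Mathlib

/-- Applying a single comparator `c = (i, j)`: the minimum of the two values goes to
channel `i` and the maximum to channel `j`. -/
def applyComp {n : ℕ} {α : Type*} [LinearOrder α] (c : Fin n × Fin n) (x : Fin n → α) :
    Fin n → α :=
  fun k => if k = c.1 then min (x c.1) (x c.2)
    else if k = c.2 then max (x c.1) (x c.2)
    else x k

/-- Propagating an input vector through a comparator network (a list of comparators). -/
def runNet {n : ℕ} {α : Type*} [LinearOrder α] (C : List (Fin n × Fin n)) (x : Fin n → α) :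
    Fin n → α :=
  C.foldl (fun v c => applyComp c v) x

/-- A standard comparator network: every comparator `(i, j)` satisfies `i < j`. -/
def Standard {n : ℕ} (C : List (Fin n × Fin n)) : Prop :=
  ∀ c ∈ C, c.1 < c.2

/-- A sorting network: a standard comparator network sorting every Boolean input. -/
def IsSortingNet {n : ℕ} (C : List (Fin n × Fin n)) : Prop :=
  Standard C ∧ ∀ x : Fin n → Bool, Monotone (runNet C x)

/-- The set of outputs of a comparator network on Boolean inputs. -/
def outputs {n : ℕ} (C : List (Fin n × Fin n)) : Set (Fin n → Bool) :=
  Set.range (runNet C)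

/-- The action of a permutation of channels on a set of Boolean vectors. -/
def permSet {n : ℕ} (π : Equiv.Perm (Fin n)) (S : Set (Fin n → Bool)) :
    Set (Fin n → Bool) :=
  (fun x => x ∘ ⇑π.symm) '' S

/-- `Ca` subsumes `Cb`: some permutation maps `outputs Ca` into `outputs Cb`. -/
def Subsumes {n : ℕ} (Ca Cb : List (Fin n × Fin n)) : Prop :=
  ∃ π : Equiv.Perm (Fin n), permSet π (outputs Ca) ⊆ outputs Cb

/-- `sortSize n` is the least size of a sorting network on `n` channels. -/
noncomputable def sortSize (n : ℕ) : ℕ :=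
  sInf {k | ∃ C : List (Fin n × Fin n), IsSortingNet C ∧ C.length = k}

/-- Number of ones in a Boolean vector. -/
def ones {n : ℕ} (x : Fin n → Bool) : ℕ :=
  (Finset.univ.filter fun i => x i = true).card

/-- A (finite) complete set of filters on `n` channels. -/
def CompleteFilters (n : ℕ) (F : Finset (List (Fin n × Fin n))) : Prop :=
  (∃ C : List (Fin n × Fin n), IsSortingNet C ∧ C.length = sortSize n) ↔
    (∃ C ∈ F, ∃ C' : List (Fin n × Fin n),
      IsSortingNet (C ++ C') ∧ (C ++ C').length = sortSize n)

/-- `wSet C x k` is the set of positions `i` such that some output vector of `C`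
with exactly `k` ones has value `x` at position `i`. -/
def wSet {n : ℕ} (C : List (Fin n × Fin n)) (x : Bool) (k : ℕ) : Set (Fin n) :=
  {i | ∃ v ∈ outputs C, ones v = k ∧ v i = x}

/-!
If `D` subsumes `C` via `π` and `C ++ C'` is a sorting network, then every output of `D ++ π⁻¹(C')`
is a sorted vector read through `π`. Untangling `π⁻¹(C')` gives a standard network `E` of the same
size such that every output of `D ++ E` is a sorted vector read through one fixed permutation `ρ`.
A standard network fixes sorted inputs, and a sorted Boolean vector is determined by its number of
ones, so `ρ` fixes every sorted vector, hence `ρ = 1` and `D ++ E` sorts. Since all filters have the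
same size, `D ++ E` is as short as `C ++ C'`.
-/

def relabel {n : ℕ} (σ : Equiv.Perm (Fin n)) (C : List (Fin n × Fin n)) :
    List (Fin n × Fin n) :=
  C.map (Prod.map σ σ)

section Relabel

variable {n : ℕ} {α : Type*} [LinearOrder α]

theorem runNet_cons (c : Fin n × Fin n) (C : List (Fin n × Fin n)) (x : Fin n → α) :
    runNet (c :: C) x = runNet C (applyComp c x) := rfl

theorem runNet_append (A B : List (Fin n × Fin n)) (x : Fin n → α) :
    runNet (A ++ B) x = runNet B (runNet A x) := List.foldl_append

theorem applyComp_prodMap (σ : Equiv.Perm (Fin n)) (c : Fin n × Fin n) (x : Fin n → α) :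
    applyComp (Prod.map σ σ c) x = applyComp c (x ∘ σ) ∘ σ.symm := by
  funext k
  simp only [applyComp, Prod.map_fst, Prod.map_snd, Function.comp_apply, Equiv.symm_apply_eq,
    Equiv.apply_symm_apply]

theorem runNet_relabel (σ : Equiv.Perm (Fin n)) (C : List (Fin n × Fin n)) (x : Fin n → α) :
    runNet (relabel σ C) x = runNet C (x ∘ σ) ∘ σ.symm := by
  induction C generalizing x with
  | nil => funext k; simp [relabel, runNet]
  | cons c C ih =>
    have hcancel : (applyComp c (x ∘ σ) ∘ σ.symm) ∘ σ = applyComp c (x ∘ σ) := by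
      funext k; simp
    simp only [relabel, List.map_cons] at ih ⊢
    rw [runNet_cons, runNet_cons, applyComp_prodMap, ih, hcancel]

theorem applyComp_swap (c : Fin n × Fin n) (x : Fin n → α) :
    applyComp c.swap x = applyComp c x ∘ Equiv.swap c.1 c.2 := by
  obtain ⟨i, j⟩ := c
  funext k
  simp only [applyComp, Prod.fst_swap, Prod.snd_swap, Function.comp_apply]
  rcases eq_or_ne k i with rfl | hki
  · rcases eq_or_ne k j with rfl | hkj
    · simp
    · simp [hkj, hkj.symm, max_comm]
  · rcases eq_or_ne k j with rfl | hkj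
    · simp [min_comm]
    · simp [Equiv.swap_apply_of_ne_of_ne hki hkj, hki, hkj]

end Relabel

section Untangle

variable {n : ℕ}

/-- Knuth's untangling of a comparator network into a standard one. -/
def untangle : List (Fin n × Fin n) → List (Fin n × Fin n)
  | [] => []
  | c :: C =>
    if c.2 < c.1 then c.swap :: untangle (relabel (Equiv.swap c.1 c.2) C)
    else c :: untangle C
  termination_by C => C.length
  decreasing_by all_goals simp [relabel]

theorem length_untangle (C : List (Fin n × Fin n)) : (untangle C).length = C.length := by
  induction C using untangle.induct with
  | case1 => simp [untangle]
  | case2 c C h ih => rw [untangle, if_pos h, List.length_cons, ih]; simp [relabel]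
  | case3 c C h ih => rw [untangle, if_neg h, List.length_cons, ih, List.length_cons]

theorem standard_untangle {C : List (Fin n × Fin n)} (hC : ∀ c ∈ C, c.1 ≠ c.2) :
    Standard (untangle C) := by
  induction C using untangle.induct with
  | case1 => simp [untangle, Standard]
  | case2 c C h ih =>
    rw [untangle, if_pos h]
    refine List.forall_mem_cons.mpr ⟨h, ih ?_⟩
    simp only [relabel, List.mem_map]
    rintro _ ⟨d, hd, rfl⟩
    exact (Equiv.injective _).ne (hC d (List.mem_cons_of_mem c hd))
  | case3 c C h ih =>
    rw [untangle, if_neg h]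
    refine List.forall_mem_cons.mpr ⟨?_, ih fun d hd => hC d (List.mem_cons_of_mem c hd)⟩
    exact lt_of_le_of_ne (not_lt.mp h) (hC c List.mem_cons_self)

theorem exists_runNet_untangle {α : Type*} [LinearOrder α] (C : List (Fin n × Fin n)) :
    ∃ σ : Equiv.Perm (Fin n), ∀ x : Fin n → α, runNet (untangle C) x = runNet C x ∘ σ := by
  induction C using untangle.induct with
  | case1 => exact ⟨1, fun x => by simp [untangle, runNet]⟩
  | case2 c C h ih =>
    obtain ⟨σ, hσ⟩ := ih
    refine ⟨σ.trans (Equiv.swap c.1 c.2), fun x => ?_⟩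
    have hflip : applyComp c.swap x ∘ Equiv.swap c.1 c.2 = applyComp c x := by
      funext k; simp [applyComp_swap]
    rw [untangle, if_pos h, runNet_cons, hσ, runNet_relabel, hflip, runNet_cons]
    funext k
    simp
  | case3 c C h ih =>
    obtain ⟨σ, hσ⟩ := ih
    exact ⟨σ, fun x => by rw [untangle, if_neg h, runNet_cons, runNet_cons, hσ]⟩

end Untangle

section Sorting

variable {n : ℕ}

theorem Standard.append {A B : List (Fin n × Fin n)} (hA : Standard A) (hB : Standard B) :
    Standard (A ++ B) :=
  List.forall_mem_append.mpr ⟨hA, hB⟩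

theorem Standard.runNet_eq_self {C : List (Fin n × Fin n)} (hC : Standard C) {x : Fin n → Bool}
    (hx : Monotone x) : runNet C x = x := by
  induction C with
  | nil => rfl
  | cons c C ih =>
    obtain ⟨hc, hC⟩ := List.forall_mem_cons.mp hC
    have hfix : applyComp c x = x := by
      funext k
      have hle := hx hc.le
      simp only [applyComp]
      split_ifs with h1 h2
      · rw [h1, min_eq_left hle]
      · rw [h2, max_eq_right hle]
      · rfl
    rw [runNet_cons, hfix, ih hC]

theorem ones_comp_perm (x : Fin n → Bool) (σ : Equiv.Perm (Fin n)) : ones (x ∘ σ) = ones x := by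
  rw [ones, ones, ← Fintype.card_subtype, ← Fintype.card_subtype]
  exact Fintype.card_congr (σ.subtypeEquiv fun _ => Iff.rfl)

/-- A monotone Boolean vector is determined by its number of ones: the sets of `true`
positions of two such vectors are upper sets, hence nested. -/
theorem eq_of_monotone_of_ones_eq {x y : Fin n → Bool} (hx : Monotone x) (hy : Monotone y)
    (h : ones x = ones y) : x = y := by
  have upper : ∀ {z : Fin n → Bool}, Monotone z → IsUpperSet {i | z i = true} :=
    fun hz _ _ hij hi => Bool.le_iff_imp.mp (hz hij) hi
  wlog hxy : {i | x i = true} ⊆ {i | y i = true} generalizing x y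
  · exact (this hy hx h.symm (((upper hx).total (upper hy)).resolve_left hxy)).symm
  have hsub : (Finset.univ.filter fun i => x i = true) ⊆ Finset.univ.filter fun i => y i = true :=
    fun i hi => by simpa using hxy (by simpa using hi)
  have heq := Finset.eq_of_subset_of_card_le hsub h.ge
  funext i
  exact Bool.eq_iff_iff.mpr (by simpa using Finset.ext_iff.mp heq i)

theorem Equiv.Perm.eq_one_of_forall_monotone_comp_eq {β : Type*} [PartialOrder β]
    {ρ : Equiv.Perm β} (h : ∀ v : β → Bool, Monotone v → v ∘ ρ = v) : ρ = 1 := by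
  classical
  have threshold (i j : β) : (i ≤ ρ j) ↔ (i ≤ j) := by
    have := congrFun (h (fun k => decide (i ≤ k)) fun a b hab => by
      simpa [Bool.le_iff_imp] using fun hia : i ≤ a => hia.trans hab) j
    simpa using this
  exact Equiv.ext fun j => le_antisymm ((threshold (ρ j) j).mp le_rfl) ((threshold j j).mpr le_rfl)

/-- A standard network whose outputs are sorted vectors read through one fixed permutation `ρ`
sorts: it leaves sorted inputs unchanged, which forces `ρ = 1`. -/
theorem isSortingNet_of_forall_eq_comp {C : List (Fin n × Fin n)} {ρ : Equiv.Perm (Fin n)}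
    (hC : Standard C) (h : ∀ x, ∃ m : Fin n → Bool, Monotone m ∧ runNet C x = m ∘ ρ) :
    IsSortingNet C := by
  have hρ : ρ = 1 := by
    refine Equiv.Perm.eq_one_of_forall_monotone_comp_eq fun v hv => ?_
    obtain ⟨m, hm, hmv⟩ := h v
    rw [hC.runNet_eq_self hv] at hmv
    have hones : ones m = ones v := by rw [hmv, ones_comp_perm]
    obtain rfl := eq_of_monotone_of_ones_eq hm hv hones
    exact hmv.symm
  refine ⟨hC, fun x => ?_⟩
  obtain ⟨m, hm, hmx⟩ := h x
  rwa [hmx, hρ, Equiv.Perm.coe_one, Function.comp_id]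

end Sorting

/-- The suffix is `C'` relabelled by the inverse of the subsuming permutation, then untangled. -/
theorem Subsumes.exists_isSortingNet_append {n : ℕ} {D C C' : List (Fin n × Fin n)}
    (hDC : Subsumes D C) (hD : Standard D) (hCC' : IsSortingNet (C ++ C')) :
    ∃ E, IsSortingNet (D ++ E) ∧ E.length = C'.length := by
  obtain ⟨π, hπ⟩ := hDC
  obtain ⟨σ, hσ⟩ := exists_runNet_untangle (α := Bool) (relabel π.symm C')
  have hC' : ∀ c ∈ relabel π.symm C', c.1 ≠ c.2 := by
    simp only [relabel, List.mem_map]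
    rintro _ ⟨c, hc, rfl⟩
    exact (Equiv.injective _).ne (hCC'.1 c (List.mem_append_right C hc)).ne
  refine ⟨_, isSortingNet_of_forall_eq_comp (ρ := σ.trans π) (hD.append (standard_untangle hC'))
    fun x => ?_, by rw [length_untangle, relabel, List.length_map]⟩
  obtain ⟨y, hy : runNet C y = runNet D x ∘ π.symm⟩ := hπ ⟨runNet D x, ⟨x, rfl⟩, rfl⟩
  refine ⟨runNet (C ++ C') y, hCC'.2 y, ?_⟩
  rw [runNet_append, hσ, runNet_relabel, Equiv.symm_symm, ← hy, ← runNet_append]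
  rfl

/-- Pruning preserves completeness: if `F` is a complete set of filters whose elements all
have the same size, and `F' ⊆ F` is such that every `C ∈ F` is subsumed by some `C' ∈ F'`,
then `F'` is a complete set of filters. -/
theorem prune_preserves_completeness (n : ℕ) (F F' : Finset (List (Fin n × Fin n)))
    (hstd : ∀ C ∈ F, Standard C) (hF : CompleteFilters n F)
    (hsize : ∃ k : ℕ, ∀ C ∈ F, C.length = k) (hsub : F' ⊆ F)
    (hcover : ∀ C ∈ F, ∃ C' ∈ F', Subsumes C' C) :
    CompleteFilters n F' := by
  refine ⟨fun hopt => ?_, fun ⟨C, _, C', hsort, hlen⟩ => ⟨C ++ C', hsort, hlen⟩⟩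
  obtain ⟨C, hC, C', hsort, hlen⟩ := hF.mp hopt
  obtain ⟨D, hD, hDC⟩ := hcover C hC
  obtain ⟨E, hDE, hE⟩ := hDC.exists_isSortingNet_append (hstd D (hsub hD)) hsort
  obtain ⟨k, hk⟩ := hsize
  refine ⟨D, hD, E, hDE, ?_⟩
  rw [List.length_append, hk D (hsub hD), hE, ← hk C hC, ← List.length_append, hlen]
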